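/- arXiv:1205.0514 — 3 statements merged into one kernel-verified Lean document; each statement's English description precedes it below -/
import Mathlib

section
/- Let a > 0 and κ ≥ 0, and let N : (0, a] → [0, ∞) be continuous and satisfy N(s) ≥ e^{−κ(s²−r²)}·N(r) − κ(s²−r²) whenever 0 < r ≤ s ≤ a. Then the limit lim_{r→0⁺} N(r) exists and is finite. -/
open Filter

noncomputable section

/-- Lemma 7.7 (first claim): a nonnegative continuous function on `(0, a]` satisfying the
approximate-monotonicity inequality of Proposition 7.1 has a finite limit at `0⁺`. -/
theorem frequency_limit_exists (a κ : ℝ) (ha : 0 < a) (hκ : 0 ≤ κ) (N : ℝ → ℝ)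
    (hcont : ContinuousOn N (Set.Ioc 0 a))
    (hnonneg : ∀ r ∈ Set.Ioc (0:ℝ) a, 0 ≤ N r)
    (hmono : ∀ r s : ℝ, 0 < r → r ≤ s → s ≤ a →
      N s ≥ Real.exp (-κ * (s ^ 2 - r ^ 2)) * N r - κ * (s ^ 2 - r ^ 2)) :
    ∃ L : ℝ, Filter.Tendsto N (nhdsWithin 0 (Set.Ioi 0)) (nhds L) := by
  set c : ℝ := Real.exp (κ * a ^ 2) with hc
  set F : ℝ → ℝ := fun r => Real.exp (κ * r ^ 2) * (N r + c) with hFdef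
  have hFmono : MonotoneOn F (Set.Ioo 0 a) := by
    intro r hr s hs hrs
    have hr2s2 : r ^ 2 ≤ s ^ 2 := by nlinarith [hr.1, hrs]
    have hΔ : 0 ≤ κ * (s ^ 2 - r ^ 2) := mul_nonneg hκ (by linarith)
    have hm := hmono r s hr.1 hrs hs.2.le
    have her : 1 ≤ Real.exp (κ * r ^ 2) :=
      Real.one_le_exp (mul_nonneg hκ (by positivity))
    have hes : Real.exp (κ * s ^ 2) ≤ c := by
      apply Real.exp_le_exp.2
      have : s ^ 2 ≤ a ^ 2 := by nlinarith [hs.1, hs.2]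
      nlinarith
    have hsplit : Real.exp (κ * s ^ 2)
        = Real.exp (κ * r ^ 2) * Real.exp (κ * (s ^ 2 - r ^ 2)) := by
      rw [← Real.exp_add]; ring_nf
    have hneg : Real.exp (-κ * (s ^ 2 - r ^ 2))
        = (Real.exp (κ * (s ^ 2 - r ^ 2)))⁻¹ := by
      rw [← Real.exp_neg]; ring_nf
    have hx1 : κ * (s ^ 2 - r ^ 2) + 1 ≤ Real.exp (κ * (s ^ 2 - r ^ 2)) :=
      Real.add_one_le_exp _
    have hepos : (0:ℝ) < Real.exp (κ * (s ^ 2 - r ^ 2)) := Real.exp_pos _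
    have hespos : (0:ℝ) < Real.exp (κ * s ^ 2) := Real.exp_pos _
    simp only [hFdef]
    rw [hneg] at hm
    have hNr : 0 ≤ N r := hnonneg r ⟨hr.1, hr.2.le⟩
    set e := Real.exp (κ * (s ^ 2 - r ^ 2)) with he
    set er := Real.exp (κ * r ^ 2) with her'
    have herpos : (0:ℝ) < er := Real.exp_pos _
    have hinv : e * e⁻¹ = 1 := mul_inv_cancel₀ hepos.ne'
    have hm' : e * N s ≥ N r - e * (κ * (s ^ 2 - r ^ 2)) := by
      have h := mul_le_mul_of_nonneg_left hm hepos.le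
      nlinarith [h, hinv, hNr, hepos]
    have hec : e ≤ c := by
      calc e ≤ er * e := by nlinarith [hepos, her]
        _ = Real.exp (κ * s ^ 2) := hsplit.symm
        _ ≤ c := hes
    have hcpos : (0:ℝ) < c := Real.exp_pos _
    have key : e * (κ * (s ^ 2 - r ^ 2)) ≤ c * (e - 1) := by
      calc e * (κ * (s ^ 2 - r ^ 2)) ≤ c * (κ * (s ^ 2 - r ^ 2)) :=
            mul_le_mul_of_nonneg_right hec hΔ
        _ ≤ c * (e - 1) := mul_le_mul_of_nonneg_left (by linarith) hcpos.le
    rw [hsplit]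
    have k2 := mul_le_mul_of_nonneg_left key herpos.le
    have k3 := mul_le_mul_of_nonneg_left hm' herpos.le
    nlinarith [k2, k3]
  have hne : (Set.Ioo (0:ℝ) a).Nonempty := ⟨a/2, by constructor <;> nlinarith⟩
  have hbdd : BddBelow (F '' Set.Ioo 0 a) := by
    refine ⟨0, ?_⟩
    rintro _ ⟨r, hr, rfl⟩
    have hNr : 0 ≤ N r := hnonneg r ⟨hr.1, hr.2.le⟩
    have : (0:ℝ) < c := Real.exp_pos _
    positivity
  have hFtend := hFmono.tendsto_nhdsWithin_Ioo_right hne hbdd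
  set L := sInf (F '' Set.Ioo 0 a)
  refine ⟨L - c, ?_⟩
  have hexp : Tendsto (fun r : ℝ => Real.exp (-(κ * r ^ 2)))
      (nhdsWithin 0 (Set.Ioi 0)) (nhds 1) := by
    have : Tendsto (fun r : ℝ => Real.exp (-(κ * r ^ 2))) (nhds 0) (nhds 1) := by
      have : Continuous (fun r : ℝ => Real.exp (-(κ * r ^ 2))) := by continuity
      simpa using this.tendsto 0
    exact this.mono_left nhdsWithin_le_nhds
  have hcomb : Tendsto (fun r => Real.exp (-(κ * r ^ 2)) * F r - c)
      (nhdsWithin 0 (Set.Ioi 0)) (nhds (L - c)) := by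
    have := (hexp.mul hFtend).sub (tendsto_const_nhds (x := c))
    simpa using this
  refine hcomb.congr' ?_
  filter_upwards [Ioo_mem_nhdsGT_of_mem (by simp [ha] : (0:ℝ) ∈ Set.Ico 0 a)] with r hr
  simp only [hFdef]
  have h1 : Real.exp (-(κ * r ^ 2)) * Real.exp (κ * r ^ 2) = 1 := by
    rw [← Real.exp_add]; simp
  linear_combination (N r + c) * h1
end
end

section
/- Let s > 0, κ ≥ 0, N₀ ≥ 0, and let h : (0, s] → (0, ∞) be differentiable and satisfy r·h′(r)/(2·h(r)) ≥ 1 + e^{−κr²}·N₀ − 2κr² for all r ∈ (0, s]. Then h(r) ≤ e^{(N₀+2)κs²}·( h(s)/s^{2+2N₀} )·r^{2+2N₀} for all r ∈ (0, s]. -/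
/-!
With `p = 2 + 2N₀` and `c = (N₀ + 2)κ`, the bound `e^{-κr²} ≥ 1 - κr²` turns the hypothesis into
`h′/h ≥ φ′` for `φ(t) = p log t - c t²`. Hence `h · e^{-φ}` is nondecreasing, so
`h(r) ≤ h(s) e^{φ(r) - φ(s)} ≤ e^{cs²} (h(s)/s^p) r^p`, dropping the factor `e^{-cr²} ≤ 1`.
-/

open Real Set

theorem le_mul_exp_sub_of_mul_le_deriv {h φ φ' : ℝ → ℝ} {a b : ℝ} (hab : a ≤ b)
    (hh : ∀ t ∈ Icc a b, DifferentiableAt ℝ h t) (hφ : ∀ t ∈ Icc a b, HasDerivAt φ (φ' t) t)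
    (hle : ∀ t ∈ Ioo a b, φ' t * h t ≤ deriv h t) :
    h a ≤ h b * exp (φ a - φ b) := by
  have hG : ∀ t ∈ Icc a b, HasDerivAt (fun u => h u * exp (-φ u))
      ((deriv h t - φ' t * h t) * exp (-φ t)) t := fun t ht =>
    ((hh t ht).hasDerivAt.fun_mul (hφ t ht).fun_neg.exp).congr_deriv (by ring)
  have hmono : MonotoneOn (fun u => h u * exp (-φ u)) (Icc a b) := by
    refine monotoneOn_of_hasDerivWithinAt_nonneg
      (f' := fun t => (deriv h t - φ' t * h t) * exp (-φ t)) (convex_Icc a b)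
      (fun t ht => (hG t ht).continuousAt.continuousWithinAt) (fun t ht => ?_) fun t ht => ?_
    all_goals rw [interior_Icc] at ht
    · exact (hG t (Ioo_subset_Icc_self ht)).hasDerivWithinAt
    · exact mul_nonneg (sub_nonneg.mpr (hle t ht)) (exp_pos _).le
  calc h a = h a * exp (-φ a) * exp (φ a) := by
        rw [mul_assoc, ← exp_add, neg_add_cancel, exp_zero, mul_one]
    _ ≤ h b * exp (-φ b) * exp (φ a) :=
        mul_le_mul_of_nonneg_right (hmono (left_mem_Icc.mpr hab) (right_mem_Icc.mpr hab) hab)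
          (exp_pos _).le
    _ = h b * exp (φ a - φ b) := by rw [mul_assoc, ← exp_add, neg_add_eq_sub]

theorem hasDerivAt_mul_log_sub_mul_sq (p c : ℝ) {t : ℝ} (ht : 0 < t) :
    HasDerivAt (fun u => p * log u - c * u ^ 2) (p / t - 2 * c * t) t :=
  (((hasDerivAt_log ht.ne').const_mul p).fun_sub
    ((hasDerivAt_pow 2 t).const_mul c)).congr_deriv (by ring)

theorem mul_le_deriv_of_frequency_ge {κ N₀ t H H' : ℝ} (hN₀ : 0 ≤ N₀) (ht : 0 < t) (hH : 0 < H)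
    (hfreq : t * H' / (2 * H) ≥ 1 + exp (-κ * t ^ 2) * N₀ - 2 * κ * t ^ 2) :
    ((2 + 2 * N₀) / t - 2 * ((N₀ + 2) * κ) * t) * H ≤ H' := by
  have hexp : (1 - κ * t ^ 2) * N₀ ≤ exp (-κ * t ^ 2) * N₀ := by
    gcongr
    linarith [add_one_le_exp (-κ * t ^ 2)]
  rw [ge_iff_le, le_div_iff₀ (by positivity)] at hfreq
  rw [← le_div_iff₀ hH, div_sub' ht.ne', div_le_div_iff₀ ht hH]
  nlinarith

theorem exp_mul_log_sub_mul_sq_sub_le {p c r s : ℝ} (hc : 0 ≤ c) (hr : 0 < r) (hs : 0 < s) :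
    exp ((p * log r - c * r ^ 2) - (p * log s - c * s ^ 2))
      ≤ exp (c * s ^ 2) * (r ^ p / s ^ p) := by
  have hsplit : (p * log r - c * r ^ 2) - (p * log s - c * s ^ 2)
      = c * s ^ 2 + (log r * p - log s * p) + -(c * r ^ 2) := by ring
  rw [hsplit, exp_add, exp_add, exp_sub, ← rpow_def_of_pos hr, ← rpow_def_of_pos hs]
  exact mul_le_of_le_one_right (by positivity)
    (exp_le_one_iff.mpr (neg_nonpos.mpr (by positivity)))

/-- The mechanism behind the first bullet of Lemma 8.2: a lower bound on the frequency
`r·h′(r)/(2h(r)) − 1` forces the doubling bound `h(r) ≤ e^{(N₀+2)κs²}·(h(s)/s^{2+2N₀})·r^{2+2N₀}`. -/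
theorem doubling_bound (s κ N₀ : ℝ) (hs : 0 < s) (hκ : 0 ≤ κ) (hN₀ : 0 ≤ N₀)
    (h : ℝ → ℝ)
    (hpos : ∀ r ∈ Set.Ioc (0:ℝ) s, 0 < h r)
    (hdiff : ∀ r ∈ Set.Ioc (0:ℝ) s, DifferentiableAt ℝ h r)
    (hineq : ∀ r ∈ Set.Ioc (0:ℝ) s,
      r * deriv h r / (2 * h r) ≥ 1 + Real.exp (-κ * r ^ 2) * N₀ - 2 * κ * r ^ 2) :
    ∀ r ∈ Set.Ioc (0:ℝ) s,
      h r ≤ Real.exp ((N₀ + 2) * κ * s ^ 2) * (h s / s ^ (2 + 2 * N₀)) * r ^ (2 + 2 * N₀) := by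
  intro r ⟨hr, hrs⟩
  have hsub : Icc r s ⊆ Ioc 0 s := Icc_subset_Ioc hr le_rfl
  have hcompare := le_mul_exp_sub_of_mul_le_deriv hrs (fun t ht => hdiff t (hsub ht))
    (fun t ht => hasDerivAt_mul_log_sub_mul_sq (2 + 2 * N₀) ((N₀ + 2) * κ) (hsub ht).1)
    fun t ht => have ht' := hsub (Ioo_subset_Icc_self ht)
      mul_le_deriv_of_frequency_ge hN₀ ht'.1 (hpos t ht') (hineq t ht')
  calc h r ≤ h s * exp (((2 + 2 * N₀) * log r - (N₀ + 2) * κ * r ^ 2)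
        - ((2 + 2 * N₀) * log s - (N₀ + 2) * κ * s ^ 2)) := hcompare
    _ ≤ h s * (exp ((N₀ + 2) * κ * s ^ 2) * (r ^ (2 + 2 * N₀) / s ^ (2 + 2 * N₀))) :=
      mul_le_mul_of_nonneg_left (exp_mul_log_sub_mul_sq_sub_le (by positivity) hr hs)
        (hpos s ⟨hs, le_rfl⟩).le
    _ = _ := by ring
end

section
/- Let δ > 0 and let f : ℝ² → ℝ be continuously differentiable with f(x) = 0 whenever |x| ≥ δ. Then ∫_{ℝ²} f(x)² dx ≤ δ²·∫_{ℝ²} ⟨x, ∇f(x)⟩²/|x|² dx. -/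
/-!
Writing `w x = ⟪x, ∇f x⟫` for the radial derivative (times `‖x‖`), integration by parts against
the coordinate functions gives the divergence identity `∫ ⟪x, ∇F x⟫ = -n ∫ F` in dimension `n`.
For `F = f²` this reads `n ∫ f² = -2 ∫ f w`. On the support of `f` we have `‖x‖ < δ`, so
`w² ≤ δ² w² / ‖x‖²`, and completing the square `(n f + 2 w)² ≥ 0` bounds `-2 n f w` by
`n² f² / 2 + 2 δ² w² / ‖x‖²`. Integrating, `n² ∫ f² ≤ (2δ)² ∫ w² / ‖x‖²`; here `n = 2`.
-/

open MeasureTheory Module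
open scoped RealInnerProductSpace

section Divergence

variable {E : Type*} [NormedAddCommGroup E] [NormedSpace ℝ E]
  [MeasurableSpace E] [BorelSpace E] {μ : Measure E} {F : E → ℝ}

theorem integrable_fderiv_apply_mul_clm [IsFiniteMeasureOnCompacts μ] (hF : ContDiff ℝ 1 F)
    (hcs : HasCompactSupport F) (v : E) (ℓ : E →L[ℝ] ℝ) :
    Integrable (fun x ↦ fderiv ℝ F x v * ℓ x) μ :=
  ((hF.continuous_fderiv one_ne_zero).clm_apply continuous_const).mul ℓ.continuous
    |>.integrable_of_hasCompactSupport (hcs.fderiv_apply (𝕜 := ℝ) v).mul_right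

variable [FiniteDimensional ℝ E] [μ.IsAddHaarMeasure]

theorem integral_fderiv_apply_mul_clm (hF : ContDiff ℝ 1 F) (hcs : HasCompactSupport F)
    (v : E) (ℓ : E →L[ℝ] ℝ) : ∫ x, fderiv ℝ F x v * ℓ x ∂μ = -(ℓ v * ∫ x, F x ∂μ) := by
  have hFd : Differentiable ℝ F := hF.differentiable one_ne_zero
  have hFℓ : Integrable (fun x ↦ F x * ℓ v) μ :=
    (hF.continuous.mul continuous_const).integrable_of_hasCompactSupport hcs.mul_right
  have ibp := integral_mul_fderiv_eq_neg_fderiv_mul_of_integrable (v := v)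
    (integrable_fderiv_apply_mul_clm hF hcs v ℓ) (by simpa only [ℓ.fderiv] using hFℓ)
    ((hF.continuous.mul ℓ.continuous).integrable_of_hasCompactSupport hcs.mul_right)
    (fun x _ ↦ hFd x) (fun x _ ↦ ℓ.differentiableAt)
  simp only [ℓ.fderiv, integral_mul_const] at ibp
  linarith

theorem integral_fderiv_apply_self (hF : ContDiff ℝ 1 F) (hcs : HasCompactSupport F) :
    ∫ x, fderiv ℝ F x x ∂μ = -(finrank ℝ E * ∫ x, F x ∂μ) := by
  let b := finBasis ℝ E
  let ℓ i : E →L[ℝ] ℝ := LinearMap.toContinuousLinearMap (b.coord i)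
  have hexpand (x : E) : fderiv ℝ F x x = ∑ i, fderiv ℝ F x (b i) * ℓ i x := by
    calc fderiv ℝ F x x = fderiv ℝ F x (∑ i, b.repr x i • b i) := by rw [b.sum_repr]
      _ = ∑ i, fderiv ℝ F x (b i) * ℓ i x := by
        simp only [map_sum, map_smul]
        simp [ℓ, mul_comm]
  simp_rw [hexpand]
  rw [integral_finsetSum _ fun i _ ↦ integrable_fderiv_apply_mul_clm hF hcs _ _]
  simp only [integral_fderiv_apply_mul_clm hF hcs]
  simp [ℓ]

end Divergence

section RadialPoincare

variable {E : Type*} [NormedAddCommGroup E] [InnerProductSpace ℝ E]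

theorem inner_sq_div_norm_sq_le (x y : E) : ⟪x, y⟫ ^ 2 / ‖x‖ ^ 2 ≤ ‖y‖ ^ 2 := by
  refine div_le_of_le_mul₀ (sq_nonneg _) (sq_nonneg _) ?_
  rw [← mul_pow, mul_comm]
  exact sq_le_sq' (neg_le_of_abs_le (abs_real_inner_le_norm x y)) (real_inner_le_norm x y)

theorem inner_sq_le_sq_mul_inner_sq_div_norm_sq {δ : ℝ} {x : E} (y : E) (hx : ‖x‖ ≤ δ) :
    ⟪x, y⟫ ^ 2 ≤ δ ^ 2 * (⟪x, y⟫ ^ 2 / ‖x‖ ^ 2) := by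
  rcases eq_or_ne x 0 with rfl | hx0
  · simp
  · calc ⟪x, y⟫ ^ 2 = ‖x‖ ^ 2 * (⟪x, y⟫ ^ 2 / ‖x‖ ^ 2) := by field_simp
      _ ≤ δ ^ 2 * (⟪x, y⟫ ^ 2 / ‖x‖ ^ 2) := by gcongr

theorem neg_two_mul_mul_inner_le {n δ a : ℝ} {x : E} (y : E) (hx : a ≠ 0 → ‖x‖ < δ) :
    -(2 * n * (a * ⟪x, y⟫)) ≤ n ^ 2 * a ^ 2 / 2 + 2 * δ ^ 2 * (⟪x, y⟫ ^ 2 / ‖x‖ ^ 2) := by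
  rcases eq_or_ne a 0 with rfl | ha
  · simp only [mul_zero, zero_mul, neg_zero]; positivity
  · have := inner_sq_le_sq_mul_inner_sq_div_norm_sq y (hx ha).le
    nlinarith [sq_nonneg (n * a + 2 * ⟪x, y⟫)]

variable [MeasurableSpace E] [BorelSpace E] {μ : Measure E}

theorem integrable_inner_sq_div_norm_sq [IsFiniteMeasureOnCompacts μ] {g : E → E}
    (hg : Continuous g) (hcs : HasCompactSupport g) :
    Integrable (fun x ↦ ⟪x, g x⟫ ^ 2 / ‖x‖ ^ 2) μ := by
  have hcs' : HasCompactSupport fun x ↦ ‖g x‖ ^ 2 :=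
    hcs.comp_left (g := fun v ↦ ‖v‖ ^ 2) (by simp)
  have hbound : Integrable (fun x ↦ ‖g x‖ ^ 2) μ :=
    (hg.norm.pow 2).integrable_of_hasCompactSupport hcs'
  refine hbound.mono' ?_ (.of_forall fun x ↦ ?_)
  · exact ((continuous_id.inner hg).pow 2).measurable.div (continuous_norm.pow 2).measurable
      |>.aestronglyMeasurable
  · rw [Real.norm_of_nonneg (by positivity)]
    exact inner_sq_div_norm_sq_le x (g x)

variable [FiniteDimensional ℝ E] [μ.IsAddHaarMeasure] {f : E → ℝ}

theorem finrank_mul_integral_sq_eq (hf : ContDiff ℝ 1 f) (hcs : HasCompactSupport f) :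
    finrank ℝ E * ∫ x, f x ^ 2 ∂μ = -(2 * ∫ x, f x * ⟪x, gradient f x⟫ ∂μ) := by
  have hfd : Differentiable ℝ f := hf.differentiable one_ne_zero
  have hderiv (x : E) : fderiv ℝ (fun y ↦ f y ^ 2) x x = 2 * (f x * ⟪x, gradient f x⟫) := by
    rw [fderiv_fun_pow 2 (hfd x), real_inner_comm, inner_gradient_left]
    simp only [smul_apply, smul_eq_mul]
    ring
  have := integral_fderiv_apply_self (μ := μ) (hf.pow 2) (hcs.comp_left (g := (· ^ 2)) (by simp))
  simp only [hderiv, integral_const_mul] at this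
  linarith

theorem finrank_sq_mul_integral_sq_le {δ : ℝ} (hf : ContDiff ℝ 1 f)
    (hsupp : ∀ x, δ ≤ ‖x‖ → f x = 0) :
    (finrank ℝ E : ℝ) ^ 2 * ∫ x, f x ^ 2 ∂μ ≤
      (2 * δ) ^ 2 * ∫ x, ⟪x, gradient f x⟫ ^ 2 / ‖x‖ ^ 2 ∂μ := by
  set n : ℝ := (finrank ℝ E : ℝ)
  have hcs : HasCompactSupport f :=
    .intro (isCompact_closedBall 0 δ) fun x hx ↦ hsupp x (by simpa using hx : δ < ‖x‖).le
  have hgrad : Continuous (gradient f) :=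
    (InnerProductSpace.toDual ℝ E).symm.continuous.comp (hf.continuous_fderiv one_ne_zero)
  have hcs_sq : HasCompactSupport fun x ↦ f x ^ 2 := hcs.comp_left (g := (· ^ 2)) (by simp)
  have hf_sq : Integrable (fun x ↦ f x ^ 2) μ :=
    (hf.continuous.pow 2).integrable_of_hasCompactSupport hcs_sq
  have hf_radial : Integrable (fun x ↦ f x * ⟪x, gradient f x⟫) μ :=
    (hf.continuous.mul (continuous_id.inner hgrad)).integrable_of_hasCompactSupport hcs.mul_right
  have hradial : Integrable (fun x ↦ ⟪x, gradient f x⟫ ^ 2 / ‖x‖ ^ 2) μ :=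
    integrable_inner_sq_div_norm_sq hgrad
      ((hcs.fderiv (𝕜 := ℝ)).comp_left (g := (InnerProductSpace.toDual ℝ E).symm) (map_zero _))
  have hpointwise (x : E) :
      -(2 * n * (f x * ⟪x, gradient f x⟫)) ≤
        n ^ 2 * f x ^ 2 / 2 + 2 * δ ^ 2 * (⟪x, gradient f x⟫ ^ 2 / ‖x‖ ^ 2) :=
    neg_two_mul_mul_inner_le _ fun hfx ↦ not_le.1 (mt (hsupp x) hfx)
  have hintegral : n ^ 2 * ∫ x, f x ^ 2 ∂μ ≤ n ^ 2 * (∫ x, f x ^ 2 ∂μ) / 2 +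
      2 * δ ^ 2 * ∫ x, ⟪x, gradient f x⟫ ^ 2 / ‖x‖ ^ 2 ∂μ := by
    calc n ^ 2 * ∫ x, f x ^ 2 ∂μ = ∫ x, -(2 * n * (f x * ⟪x, gradient f x⟫)) ∂μ := by
          rw [integral_neg, integral_const_mul, sq, mul_assoc, finrank_mul_integral_sq_eq hf hcs]
          ring
      _ ≤ ∫ x, (n ^ 2 * f x ^ 2 / 2 + 2 * δ ^ 2 * (⟪x, gradient f x⟫ ^ 2 / ‖x‖ ^ 2)) ∂μ :=
          integral_mono (hf_radial.const_mul _).neg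
            (((hf_sq.const_mul _).div_const _).add (hradial.const_mul _)) hpointwise
      _ = _ := by
          rw [integral_add ((hf_sq.const_mul _).div_const _) (hradial.const_mul _),
            integral_div, integral_const_mul, integral_const_mul]
  linarith

end RadialPoincare

theorem radial_poincare_general (δ : ℝ) (f : EuclideanSpace ℝ (Fin 2) → ℝ)
    (hf : ContDiff ℝ 1 f)
    (hsupp : ∀ x : EuclideanSpace ℝ (Fin 2), δ ≤ ‖x‖ → f x = 0) :
    (∫ x : EuclideanSpace ℝ (Fin 2), (f x) ^ 2) ≤
      δ ^ 2 * ∫ x : EuclideanSpace ℝ (Fin 2), ⟪x, gradient f x⟫ ^ 2 / ‖x‖ ^ 2 := by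
  have h := finrank_sq_mul_integral_sq_le (μ := volume) hf hsupp
  rw [finrank_euclideanSpace, Fintype.card_fin] at h
  push_cast at h
  linarith

/-- The weighted Poincaré inequality of Step 5 of the proof of Lemma 8.10: for a
compactly supported C¹ function on ℝ², the L² norm is controlled by the radial derivative. -/
theorem radial_poincare (δ : ℝ) (hδ : 0 < δ) (f : EuclideanSpace ℝ (Fin 2) → ℝ)
    (hf : ContDiff ℝ 1 f)
    (hsupp : ∀ x : EuclideanSpace ℝ (Fin 2), δ ≤ ‖x‖ → f x = 0) :
    (∫ x : EuclideanSpace ℝ (Fin 2), (f x) ^ 2) ≤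
      δ ^ 2 * ∫ x : EuclideanSpace ℝ (Fin 2), ⟪x, gradient f x⟫ ^ 2 / ‖x‖ ^ 2 :=
  radial_poincare_general δ f hf hsupp
end
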